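/- arXiv:math/0505316 — 2 statements merged into one kernel-verified Lean document; each statement's English description precedes it below -/
import Mathlib

section
/- For every nonnegative integers m and n, the integral over [0,∞) of exp(-x)·L̃_m(x)·L̃_n(x) dx equals (n!)² if m = n and 0 otherwise, where L̃_n(x) = Σ_{k=0}^{n} (-1)^k (n!)²/((k!)²(n-k)!) x^k is the n-th (unnormalized) Laguerre polynomial. -/
open Real MeasureTheory

/-- The `n`-th unnormalized Laguerre polynomial
`L̃_n(x) = ∑_{k=0}^{n} (-1)^k (n!)² / ((k!)² (n-k)!) x^k`. -/
noncomputable def unnormLaguerre (n : ℕ) (x : ℝ) : ℝ :=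
  ∑ k ∈ Finset.range (n + 1),
    (-1 : ℝ) ^ k * ((n.factorial : ℝ) ^ 2 /
      ((k.factorial : ℝ) ^ 2 * ((n - k).factorial : ℝ))) * x ^ k

/-!
Expanding `L̃_m` reduces the integral to the moments `∫ e^{-x} x^j L̃_n(x) dx` with `j ≤ m`.
Since `∫ e^{-x} x^p dx = p!`, such a moment is `n! ∑_k (-1)^k C(n,k) (k+1)(k+2)⋯(k+j)`, i.e.
`(-1)^n n!` times the `n`-th forward difference at `1` of the monic degree-`j` polynomial
`x(x+1)⋯(x+j-1)`. That difference vanishes for `j < n` and equals `n!` for `j = n`. So, taking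
`m ≤ n` by symmetry, only the term `j = m = n` survives, and the leading coefficient of `L̃_n`
is `(-1)^n`.
-/

open Finset fwdDiff

theorem sum_range_alternating_choose_mul_eq_fwdDiff_iter {R : Type*} [CommRing R]
    (f : R → R) (n : ℕ) :
    ∑ k ∈ range (n + 1), (-1 : R) ^ k * n.choose k * f k = (-1) ^ n * Δ_[1] ^[n] f 0 := by
  rw [fwdDiff_iter_eq_sum_shift, mul_sum]
  refine sum_congr rfl fun k hk => ?_
  obtain ⟨d, rfl⟩ := Nat.exists_eq_add_of_le (mem_range_succ_iff.mp hk)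
  simp only [Nat.add_sub_cancel_left, zsmul_eq_mul, Int.cast_mul, Int.cast_pow, Int.cast_neg,
    Int.cast_one, Int.cast_natCast, nsmul_eq_mul, mul_one, zero_add, pow_add]
  have hsq : ((-1 : R) ^ d) ^ 2 = 1 := by rw [← pow_mul, mul_comm, pow_mul, neg_one_sq, one_pow]
  linear_combination -(-1 : R) ^ k * (k + d).choose k * f k * hsq

theorem sum_range_alternating_choose_mul_ascPochhammer_eval_succ {R : Type*} [CommRing R]
    [IsDomain R] {j n : ℕ} (hjn : j ≤ n) :
    ∑ k ∈ range (n + 1), (-1 : R) ^ k * n.choose k * (ascPochhammer R j).eval ((k : R) + 1)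
      = if j = n then (-1 : R) ^ n * n.factorial else 0 := by
  rw [sum_range_alternating_choose_mul_eq_fwdDiff_iter (fun x => (ascPochhammer R j).eval (x + 1)),
    fwdDiff_iter_comp_add 1 (ascPochhammer R j).eval 1 n 0, zero_add]
  rcases hjn.lt_or_eq with hlt | rfl
  · rw [if_neg hlt.ne,
      Polynomial.fwdDiff_iter_eq_zero_of_degree_lt (by rwa [ascPochhammer_natDegree]),
      Pi.zero_apply, mul_zero]
  · have h := (ascPochhammer R j).fwdDiff_iter_degree_eq_factorial
    rw [ascPochhammer_natDegree, (monic_ascPochhammer R j).leadingCoeff] at h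
    simp [h]

theorem integrableOn_exp_neg_mul_pow (p : ℕ) :
    IntegrableOn (fun x => exp (-x) * x ^ p) (Set.Ioi 0) := by
  simpa [← Real.rpow_natCast] using Real.GammaIntegral_convergent (s := p + 1) (by positivity)

theorem integral_exp_neg_mul_pow (p : ℕ) :
    ∫ x in Set.Ioi 0, exp (-x) * x ^ p = p.factorial := by
  simpa [← Real.rpow_natCast] using
    (Real.Gamma_eq_integral (s := p + 1) (by positivity)).symm.trans (Real.Gamma_nat_eq_factorial p)

noncomputable def unnormLaguerreCoeff (n k : ℕ) : ℝ :=
  (-1 : ℝ) ^ k * ((n.factorial : ℝ) ^ 2 / ((k.factorial : ℝ) ^ 2 * ((n - k).factorial : ℝ)))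

theorem unnormLaguerreCoeff_self (n : ℕ) : unnormLaguerreCoeff n n = (-1) ^ n := by
  rw [unnormLaguerreCoeff, Nat.sub_self, Nat.factorial_zero, Nat.cast_one, mul_one,
    div_self (by positivity), mul_one]

theorem unnormLaguerreCoeff_mul_factorial_add {n k : ℕ} (hkn : k ≤ n) (j : ℕ) :
    unnormLaguerreCoeff n k * (k + j).factorial
      = n.factorial * ((-1) ^ k * n.choose k * (ascPochhammer ℝ j).eval ((k : ℝ) + 1)) := by
  have hchoose : (n.choose k : ℝ) * k.factorial * (n - k).factorial = n.factorial := by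
    exact_mod_cast Nat.choose_mul_factorial_mul_factorial hkn
  rw [unnormLaguerreCoeff, ← factorial_mul_ascPochhammer ℝ k j, ← hchoose]
  field_simp

theorem exp_neg_mul_unnormLaguerre_mul (n : ℕ) (g : ℝ → ℝ) (x : ℝ) :
    exp (-x) * unnormLaguerre n x * g x
      = ∑ k ∈ range (n + 1), unnormLaguerreCoeff n k * (exp (-x) * x ^ k * g x) := by
  rw [unnormLaguerre, mul_sum, sum_mul]
  exact sum_congr rfl fun k _ => by rw [unnormLaguerreCoeff]; ring

theorem exp_neg_mul_pow_mul_unnormLaguerre (j n : ℕ) (x : ℝ) :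
    exp (-x) * x ^ j * unnormLaguerre n x
      = ∑ k ∈ range (n + 1), unnormLaguerreCoeff n k * (exp (-x) * x ^ (k + j)) := by
  simp_rw [mul_right_comm _ (x ^ j), exp_neg_mul_unnormLaguerre_mul n (· ^ j), mul_assoc,
    ← pow_add]

theorem integrableOn_exp_neg_mul_pow_mul_unnormLaguerre (j n : ℕ) :
    IntegrableOn (fun x => exp (-x) * x ^ j * unnormLaguerre n x) (Set.Ioi 0) := by
  simp_rw [exp_neg_mul_pow_mul_unnormLaguerre]
  exact integrable_finsetSum _ fun k _ => (integrableOn_exp_neg_mul_pow _).const_mul _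

theorem integral_exp_neg_mul_pow_mul_unnormLaguerre {j n : ℕ} (hjn : j ≤ n) :
    ∫ x in Set.Ioi 0, exp (-x) * x ^ j * unnormLaguerre n x
      = if j = n then (-1) ^ n * (n.factorial : ℝ) ^ 2 else 0 := by
  simp_rw [exp_neg_mul_pow_mul_unnormLaguerre]
  rw [integral_finsetSum _ fun k _ => (integrableOn_exp_neg_mul_pow _).const_mul _]
  simp_rw [integral_const_mul, integral_exp_neg_mul_pow]
  rw [sum_congr rfl fun k hk =>
      unnormLaguerreCoeff_mul_factorial_add (mem_range_succ_iff.mp hk) j,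
    ← mul_sum, sum_range_alternating_choose_mul_ascPochhammer_eval_succ hjn]
  split_ifs <;> ring

/-- Orthogonality of the unnormalized Laguerre polynomials:
`∫₀^∞ e^{-x} L̃_m(x) L̃_n(x) dx = (n!)² δ_{m,n}`. -/
theorem laguerre_orthogonality (m n : ℕ) :
    ∫ x in Set.Ioi (0 : ℝ), Real.exp (-x) * unnormLaguerre m x * unnormLaguerre n x
      = if m = n then ((n.factorial : ℝ)) ^ 2 else 0 := by
  wlog hmn : m ≤ n generalizing m n
  · simp_rw [mul_right_comm _ (unnormLaguerre m _), this n m (by omega), eq_comm (a := n)]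
    split_ifs with h <;> simp [h]
  simp_rw [exp_neg_mul_unnormLaguerre_mul m (unnormLaguerre n)]
  rw [integral_finsetSum _ fun j _ =>
    (integrableOn_exp_neg_mul_pow_mul_unnormLaguerre j n).const_mul _]
  simp_rw [integral_const_mul]
  rw [sum_congr rfl fun j hj => congrArg _ <|
    integral_exp_neg_mul_pow_mul_unnormLaguerre ((mem_range_succ_iff.mp hj).trans hmn)]
  simp_rw [mul_ite, mul_zero]
  rw [sum_ite_eq']
  rcases hmn.lt_or_eq with hlt | rfl
  · rw [if_neg (by simpa using hlt.not_ge), if_neg hlt.ne]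
  · rw [if_pos (self_mem_range_succ m), if_pos rfl, unnormLaguerreCoeff_self, ← mul_assoc,
      ← mul_pow, neg_one_mul, neg_neg, one_pow, one_mul]
end

section
/- For every nonnegative integer n and all x ≥ 0, the unnormalized Laguerre polynomial satisfies L̃_n(x) = exp(x) · dⁿ/dxⁿ (xⁿ exp(-x)) (Rodrigues' formula). -/
open Real

/-! By the Leibniz rule, `(d/dx)ⁿ (e^{-x} xⁿ) = Σₖ C(n,k) (-1)ᵏ e^{-x} · n!/k! · xᵏ`,
and `C(n,k) · n!/k! = (n!)² / ((k!)² (n-k)!)` is the Laguerre coefficient. -/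

theorem Nat.factorial_sq_div_eq_choose_mul_descFactorial {K : Type*} [Field K] [CharZero K]
    {n k : ℕ} (hk : k ≤ n) :
    (n.factorial : K) ^ 2 / ((k.factorial : K) ^ 2 * ((n - k).factorial : K))
      = n.choose k * n.descFactorial (n - k) := by
  have hchoose : (n.choose k * k.factorial * (n - k).factorial : K) = n.factorial := by
    exact_mod_cast Nat.choose_mul_factorial_mul_factorial hk
  have hdesc : (k.factorial * n.descFactorial (n - k) : K) = n.factorial := by
    have := Nat.factorial_mul_descFactorial (Nat.sub_le n k)
    rw [Nat.sub_sub_self hk] at this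
    exact_mod_cast this
  rw [div_eq_iff (by simp [Nat.factorial_ne_zero]), sq]
  nth_rw 1 [← hchoose]
  rw [← hdesc]
  ring

theorem iteratedDeriv_exp_neg (k : ℕ) :
    iteratedDeriv k (fun y : ℝ => exp (-y)) = fun y => (-1) ^ k * exp (-y) := by
  simpa using iteratedDeriv_exp_const_mul k (-1)

theorem iteratedDeriv_exp_neg_mul_pow (n m : ℕ) (x : ℝ) :
    iteratedDeriv n (fun y : ℝ => exp (-y) * y ^ m) x
      = ∑ k ∈ Finset.range (n + 1),
          n.choose k * ((-1) ^ k * exp (-x)) * (m.descFactorial (n - k) * x ^ (m - (n - k))) := by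
  rw [iteratedDeriv_fun_mul (by fun_prop) (by fun_prop)]
  simp only [iteratedDeriv_exp_neg, iteratedDeriv_pow]

theorem laguerre_rodrigues_general (n : ℕ) (x : ℝ) :
    unnormLaguerre n x
      = Real.exp x * iteratedDeriv n (fun y : ℝ => y ^ n * Real.exp (-y)) x := by
  simp_rw [mul_comm _ (exp (-_)), iteratedDeriv_exp_neg_mul_pow, Finset.mul_sum, unnormLaguerre]
  refine Finset.sum_congr rfl fun k hk => ?_
  have hkn : k ≤ n := Nat.lt_succ_iff.mp (Finset.mem_range.mp hk)
  rw [Nat.factorial_sq_div_eq_choose_mul_descFactorial hkn, Nat.sub_sub_self hkn]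
  have hexp : exp x * exp (-x) = 1 := by rw [← exp_add, add_neg_cancel, exp_zero]
  linear_combination -(-1) ^ k * n.choose k * n.descFactorial (n - k) * x ^ k * hexp

/-- Rodrigues' formula: `L̃_n(x) = e^x (d/dx)^n (x^n e^{-x})` for `x ≥ 0`. -/
theorem laguerre_rodrigues (n : ℕ) (x : ℝ) (hx : 0 ≤ x) :
    unnormLaguerre n x
      = Real.exp x * iteratedDeriv n (fun y : ℝ => y ^ n * Real.exp (-y)) x :=
  laguerre_rodrigues_general n x
end
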